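/- arXiv:2505.03937 — 2 statements merged into one kernel-verified Lean document; each statement's English description precedes it below -/
import Mathlib

section
/- In the compounding carryover model Y_{t2} = β₀ + β₁^{1 + γ Z_{t1}} Z_{t2} + β₂ X + ε with Z_{t2} = 1 − Z_{t1} (counterbalanced), conditional on balanced covariates (E[X | Z_{t2}=1] = E[X | Z_{t2}=0]) and E[ε | Z_{t1}, Z_{t2}, X] = 0, the difference in means E[Y_{t2} | Z_{t2}=1] − E[Y_{t2} | Z_{t2}=0] equals β₁ (not β₁^{1+γ}), since Z_{t2}=1 implies Z_{t1}=0; hence the naive estimand recovers the unexposed-effect β₁ regardless of γ. -/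
open MeasureTheory ProbabilityTheory

/-!
On `{Z_{t2} = 1}` the counterbalancing forces `Z_{t1} = 0`, so the carryover exponent collapses
to `1` and `Y_{t2} = β₀ + β₁ + β₂ X + ε` there, while on `{Z_{t2} = 0}` the treatment term vanishes
and `Y_{t2} = β₀ + β₂ X + ε`. Both events are measurable for the σ-algebra `m'` on which `ε` has
zero conditional expectation, so `ε` integrates to zero against either conditional measure, and
the balanced covariate means cancel in the difference.
-/

section CondIntegral

variable {Ω : Type*} {m m₀ : MeasurableSpace Ω} {μ : Measure Ω} {s : Set Ω}

theorem MeasureTheory.Integrable.cond {E : Type*} [NormedAddCommGroup E] {f : Ω → E}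
    (hf : Integrable f μ) (hμs : μ s ≠ 0) : Integrable f μ[|s] :=
  hf.restrict.smul_measure (ENNReal.inv_ne_top.mpr hμs)

theorem integral_cond_eq_zero_of_condExp_ae_eq_zero {E : Type*} [NormedAddCommGroup E]
    [NormedSpace ℝ E] [CompleteSpace E] (hm : m ≤ m₀) [SigmaFinite (μ.trim hm)] {f : Ω → E}
    (hf : Integrable f μ) (hf0 : μ[f|m] =ᵐ[μ] 0) (hs : MeasurableSet[m] s) :
    ∫ ω, f ω ∂μ[|s] = 0 := by
  have hset : ∫ ω in s, f ω ∂μ = 0 := by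
    rw [← setIntegral_condExp hm hf hs, integral_congr_ae (ae_restrict_of_ae hf0)]
    simp
  rw [ProbabilityTheory.cond, integral_smul_measure, hset, smul_zero]

theorem integral_cond_eq_of_eqOn_affine_add_noise [IsFiniteMeasure μ] (hm : m ≤ m₀)
    {X ε Y : Ω → ℝ} (hX : Integrable X μ) (hε : Integrable ε μ) (hε0 : μ[ε|m] =ᵐ[μ] 0)
    (hs : MeasurableSet[m] s) (hμs : μ s ≠ 0) {v b : ℝ}
    (hY : ∀ ω ∈ s, Y ω = v + b * X ω + ε ω) :
    ∫ ω, Y ω ∂μ[|s] = v + b * ∫ ω, X ω ∂μ[|s] := by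
  have := cond_isProbabilityMeasure (s := s) hμs
  have hYae : Y =ᵐ[μ[|s]] fun ω => v + b * X ω + ε ω := (ae_cond_mem (hm s hs)).mono hY
  have hbX : Integrable (fun ω => b * X ω) μ[|s] := (hX.cond hμs).const_mul b
  have hvbX : Integrable (fun ω => v + b * X ω) μ[|s] := (integrable_const v).add hbX
  rw [integral_congr_ae hYae, integral_add hvbX (hε.cond hμs),
    integral_add (integrable_const v) hbX, integral_cond_eq_zero_of_condExp_ae_eq_zero hm hε hε0 hs,
    integral_const, integral_const_mul]
  simp

end CondIntegral

theorem compounding_carryover_naive_general {Ω : Type*} [mΩ : MeasurableSpace Ω]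
    (μ : Measure Ω) [IsProbabilityMeasure μ]
    (m' : MeasurableSpace Ω) (hm' : m' ≤ mΩ)
    (Zt1 Zt2 X ε : Ω → ℝ)
    (hcb : ∀ ω, Zt2 ω = 1 - Zt1 ω)
    (hZ2m : Measurable[m'] Zt2)
    (hintX : Integrable X μ) (hintε : Integrable ε μ)
    (hε : μ[ε|m'] =ᵐ[μ] 0)
    (β0 β1 β2 γ : ℝ)
    (Yt2 : Ω → ℝ)
    (hY : ∀ ω, Yt2 ω = β0 + β1 ^ (1 + γ * Zt1 ω) * Zt2 ω + β2 * X ω + ε ω)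
    (hbal : ∫ ω, X ω ∂(μ[|{ω | Zt2 ω = 1}]) = ∫ ω, X ω ∂(μ[|{ω | Zt2 ω = 0}]))
    (hpos1 : 0 < μ {ω | Zt2 ω = 1}) (hpos0 : 0 < μ {ω | Zt2 ω = 0}) :
    (∫ ω, Yt2 ω ∂(μ[|{ω | Zt2 ω = 1}]))
      - ∫ ω, Yt2 ω ∂(μ[|{ω | Zt2 ω = 0}]) = β1 := by
  have htreated : ∫ ω, Yt2 ω ∂(μ[|{ω | Zt2 ω = 1}])
      = (β0 + β1) + β2 * ∫ ω, X ω ∂(μ[|{ω | Zt2 ω = 1}]) := by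
    refine integral_cond_eq_of_eqOn_affine_add_noise hm' hintX hintε hε
      (hZ2m (measurableSet_singleton 1)) hpos1.ne' fun ω (hz2 : Zt2 ω = 1) => ?_
    have hz1 : Zt1 ω = 0 := by linarith [hcb ω]
    rw [hY ω, hz1, hz2]
    norm_num
  have hcontrol : ∫ ω, Yt2 ω ∂(μ[|{ω | Zt2 ω = 0}])
      = β0 + β2 * ∫ ω, X ω ∂(μ[|{ω | Zt2 ω = 0}]) := by
    refine integral_cond_eq_of_eqOn_affine_add_noise hm' hintX hintε hε
      (hZ2m (measurableSet_singleton 0)) hpos0.ne' fun ω (hz2 : Zt2 ω = 0) => ?_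
    rw [hY ω, hz2, mul_zero, add_zero]
  rw [htreated, hcontrol, hbal]
  ring

/-- In the compounding carryover model
Y_{t2} = β₀ + β₁^{1+γZ_{t1}} Z_{t2} + β₂X + ε with Z_{t2} = 1 − Z_{t1} and β₁ > 0,
if covariates are balanced and E[ε|Z_{t1},Z_{t2},X] = 0, then
E[Y_{t2}|Z_{t2}=1] − E[Y_{t2}|Z_{t2}=0] = β₁ (not β₁^{1+γ}), since Z_{t2}=1
implies Z_{t1}=0. -/
theorem compounding_carryover_naive {Ω : Type*} [mΩ : MeasurableSpace Ω]
    (μ : Measure Ω) [IsProbabilityMeasure μ]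
    (m' : MeasurableSpace Ω) (hm' : m' ≤ mΩ)
    (Zt1 Zt2 X ε : Ω → ℝ)
    (hZ : ∀ ω, Zt1 ω = 0 ∨ Zt1 ω = 1) (hcb : ∀ ω, Zt2 ω = 1 - Zt1 ω)
    (hZ1m : Measurable[m'] Zt1) (hZ2m : Measurable[m'] Zt2)
    (hXm : Measurable[m'] X)
    (hintX : Integrable X μ) (hintε : Integrable ε μ)
    (hε : μ[ε|m'] =ᵐ[μ] 0)
    (β0 β1 β2 γ : ℝ) (hβ1 : 0 < β1)
    (Yt2 : Ω → ℝ)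
    (hY : ∀ ω, Yt2 ω = β0 + β1 ^ (1 + γ * Zt1 ω) * Zt2 ω + β2 * X ω + ε ω)
    (hbal : ∫ ω, X ω ∂(μ[|{ω | Zt2 ω = 1}]) = ∫ ω, X ω ∂(μ[|{ω | Zt2 ω = 0}]))
    (hpos1 : 0 < μ {ω | Zt2 ω = 1}) (hpos0 : 0 < μ {ω | Zt2 ω = 0}) :
    (∫ ω, Yt2 ω ∂(μ[|{ω | Zt2 ω = 1}]))
      - ∫ ω, Yt2 ω ∂(μ[|{ω | Zt2 ω = 0}]) = β1 :=
  compounding_carryover_naive_general (mΩ := mΩ) μ m' hm' Zt1 Zt2 X ε hcb hZ2m hintX hintε hε β0 β1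
    β2 γ Yt2 hY hbal hpos1 hpos0
end

section
/- Suppose all carryover is mediated by the covariate: Y_{t2} = τ Z_{t2} + X_{t2} + ε with X_{t2} = X_{t1} + γ Z_{t1}, E[ε]=0, ε ⫫ (Z_{t1},Z_{t2},X_{t1}), and X_{t1} ⫫ (Z_{t1},Z_{t2}). If Z_{t2} = 1 − Z_{t1} (counterbalanced) with P(Z_{t1}=1)=p ∈ (0,1), then the unadjusted difference in means satisfies E[Y_{t2} | Z_{t2}=1] − E[Y_{t2} | Z_{t2}=0] = τ − γ, which differs from τ whenever γ ≠ 0. -/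
/-!
On `{Z_{t2} = 1} = {Z_{t1} = 0}` the outcome is `τ + X_{t1} + ε`, and on `{Z_{t2} = 0} = {Z_{t1} = 1}`
it is `γ + X_{t1} + ε`. Conditioning on an event determined by `Z_{t1}` leaves the means of the
independent `X_{t1}` and `ε` unchanged, so they cancel in the difference.
-/

open MeasureTheory ProbabilityTheory

namespace ProbabilityTheory

variable {Ω β : Type*} {mΩ : MeasurableSpace Ω} [MeasurableSpace β] {μ : Measure Ω}
  [IsFiniteMeasure μ] {X : Ω → ℝ} {Z : Ω → β} {t : Set β}

lemma IndepFun.setIntegral_preimage_eq (hXZ : IndepFun X Z μ) (hX : Integrable X μ)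
    (hZ : Measurable Z) (ht : MeasurableSet t) :
    ∫ ω in Z ⁻¹' t, X ω ∂μ = μ.real (Z ⁻¹' t) * ∫ ω, X ω ∂μ := by
  have hs : MeasurableSet (Z ⁻¹' t) := hZ ht
  have hind : IndepFun X ((Z ⁻¹' t).indicator (1 : Ω → ℝ)) μ := by
    have hcomp : t.indicator 1 ∘ Z = (Z ⁻¹' t).indicator (1 : Ω → ℝ) := by
      ext ω
      exact Set.indicator_comp_right Z
    exact hcomp ▸ hXZ.comp measurable_id (measurable_one.indicator ht)
  have hprod := hind.integral_fun_mul_eq_mul_integral hX.aestronglyMeasurable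
    ((integrable_const (1 : ℝ)).indicator hs).aestronglyMeasurable
  rw [integral_indicator_one hs] at hprod
  rw [mul_comm, ← hprod, ← integral_indicator hs]
  congr 1 with ω
  by_cases hω : ω ∈ Z ⁻¹' t <;> simp [hω]

lemma IndepFun.integral_cond_preimage_eq (hXZ : IndepFun X Z μ) (hX : Integrable X μ)
    (hZ : Measurable Z) (ht : MeasurableSet t) (hμ : μ (Z ⁻¹' t) ≠ 0) :
    ∫ ω, X ω ∂μ[|Z ⁻¹' t] = ∫ ω, X ω ∂μ := by
  have hreal : μ.real (Z ⁻¹' t) ≠ 0 := (measureReal_ne_zero_iff (measure_ne_top _ _)).2 hμ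
  rw [cond, integral_smul_measure, hXZ.setIntegral_preimage_eq hX hZ ht, ENNReal.toReal_inv,
    smul_eq_mul, ← Measure.real, inv_mul_cancel_left₀ hreal]

lemma integral_cond_preimage_eq_const_add {ε Y : Ω → ℝ} (hX : Integrable X μ)
    (hε : Integrable ε μ) (hXZ : IndepFun X Z μ) (hεZ : IndepFun ε Z μ) (hZ : Measurable Z)
    (ht : MeasurableSet t) (hμ : μ (Z ⁻¹' t) ≠ 0) (c : ℝ)
    (hY : ∀ ω ∈ Z ⁻¹' t, Y ω = c + X ω + ε ω) :
    ∫ ω, Y ω ∂μ[|Z ⁻¹' t] = c + ∫ ω, X ω ∂μ + ∫ ω, ε ω ∂μ := by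
  have : IsProbabilityMeasure μ[|Z ⁻¹' t] := cond_isProbabilityMeasure hμ
  have hXc : Integrable X μ[|Z ⁻¹' t] := hX.restrict.smul_measure (ENNReal.inv_ne_top.2 hμ)
  have hεc : Integrable ε μ[|Z ⁻¹' t] := hε.restrict.smul_measure (ENNReal.inv_ne_top.2 hμ)
  calc ∫ ω, Y ω ∂μ[|Z ⁻¹' t] = ∫ ω, c + X ω + ε ω ∂μ[|Z ⁻¹' t] :=
        integral_congr_ae (ae_cond_of_forall_mem (hZ ht) hY)
    _ = c + ∫ ω, X ω ∂μ[|Z ⁻¹' t] + ∫ ω, ε ω ∂μ[|Z ⁻¹' t] := by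
        have hcX : Integrable (fun ω => c + X ω) μ[|Z ⁻¹' t] := (integrable_const c).add hXc
        rw [integral_add hcX hεc, integral_add (integrable_const c) hXc,
          integral_const, probReal_univ, one_smul]
    _ = c + ∫ ω, X ω ∂μ + ∫ ω, ε ω ∂μ := by
        rw [hXZ.integral_cond_preimage_eq hX hZ ht hμ, hεZ.integral_cond_preimage_eq hε hZ ht hμ]

end ProbabilityTheory

theorem cwsd_covariate_mediated_bias_general {Ω : Type*} [mΩ : MeasurableSpace Ω]
    (μ : Measure Ω) [IsProbabilityMeasure μ]
    (Zt1 Xt1 ε : Ω → ℝ)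
    (hZ : ∀ ω, Zt1 ω = 0 ∨ Zt1 ω = 1) (hZmeas : Measurable Zt1)
    (p : ℝ) (hp0 : 0 < p) (hp1 : p < 1)
    (hp : μ {ω | Zt1 ω = 1} = ENNReal.ofReal p)
    (Zt2 : Ω → ℝ) (hcb : ∀ ω, Zt2 ω = 1 - Zt1 ω)
    (γ τ : ℝ)
    (Xt2 : Ω → ℝ) (hX2 : ∀ ω, Xt2 ω = Xt1 ω + γ * Zt1 ω)
    (hintX : Integrable Xt1 μ) (hintε : Integrable ε μ)
    (hεindep : IndepFun ε (fun ω => (Zt1 ω, Zt2 ω, Xt1 ω)) μ)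
    (hXindep : IndepFun Xt1 (fun ω => (Zt1 ω, Zt2 ω)) μ)
    (Yt2 : Ω → ℝ) (hY : ∀ ω, Yt2 ω = τ * Zt2 ω + Xt2 ω + ε ω) :
    (∫ ω, Yt2 ω ∂(μ[|{ω | Zt2 ω = 1}]))
        - (∫ ω, Yt2 ω ∂(μ[|{ω | Zt2 ω = 0}])) = τ - γ ∧
      (γ ≠ 0 →
        (∫ ω, Yt2 ω ∂(μ[|{ω | Zt2 ω = 1}]))
          - (∫ ω, Yt2 ω ∂(μ[|{ω | Zt2 ω = 0}])) ≠ τ) := by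
  have hXZ : IndepFun Xt1 Zt1 μ := hXindep.comp measurable_id measurable_fst
  have hεZ : IndepFun ε Zt1 μ := hεindep.comp measurable_id measurable_fst
  have hs1 : MeasurableSet {ω | Zt1 ω = 1} := hZmeas (measurableSet_singleton 1)
  have hcompl : {ω | Zt1 ω = 0} = {ω | Zt1 ω = 1}ᶜ := by
    ext ω
    rcases hZ ω with h | h <;> simp [h]
  have hμ1 : μ {ω | Zt1 ω = 1} ≠ 0 := hp ▸ (ENNReal.ofReal_pos.2 hp0).ne'
  have hμ0 : μ {ω | Zt1 ω = 0} ≠ 0 := by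
    rw [hcompl, prob_compl_eq_one_sub hs1, hp]
    exact (tsub_pos_of_lt (ENNReal.ofReal_lt_one.2 hp1)).ne'
  have htreated : {ω | Zt2 ω = 1} = {ω | Zt1 ω = 0} := by
    ext ω
    simp [hcb]
  have hcontrol : {ω | Zt2 ω = 0} = {ω | Zt1 ω = 1} := by
    ext ω
    simp [hcb, sub_eq_zero, eq_comm (a := Zt1 ω)]
  have hmean_treated : ∫ ω, Yt2 ω ∂μ[|{ω | Zt1 ω = 0}] = τ + ∫ ω, Xt1 ω ∂μ + ∫ ω, ε ω ∂μ :=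
    integral_cond_preimage_eq_const_add hintX hintε hXZ hεZ hZmeas (measurableSet_singleton 0)
      hμ0 τ (fun ω (hω : Zt1 ω = 0) => by rw [hY, hcb, hX2, hω]; ring)
  have hmean_control : ∫ ω, Yt2 ω ∂μ[|{ω | Zt1 ω = 1}] = γ + ∫ ω, Xt1 ω ∂μ + ∫ ω, ε ω ∂μ :=
    integral_cond_preimage_eq_const_add hintX hintε hXZ hεZ hZmeas (measurableSet_singleton 1)
      hμ1 γ (fun ω (hω : Zt1 ω = 1) => by rw [hY, hcb, hX2, hω]; ring)
  rw [htreated, hcontrol, hmean_treated, hmean_control]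
  exact ⟨by ring, fun hγ h => hγ (by linarith)⟩

/-- With carryover mediated entirely by the covariate
(X_{t2} = X_{t1} + γ Z_{t1}), a counterbalanced design (Z_{t2} = 1 − Z_{t1}) with
P(Z_{t1}=1) = p ∈ (0,1) yields an unadjusted difference in means
E[Y_{t2}|Z_{t2}=1] − E[Y_{t2}|Z_{t2}=0] = τ − γ, which differs from τ when γ ≠ 0. -/
theorem cwsd_covariate_mediated_bias {Ω : Type*} [mΩ : MeasurableSpace Ω]
    (μ : Measure Ω) [IsProbabilityMeasure μ]
    (Zt1 Xt1 ε : Ω → ℝ)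
    (hZ : ∀ ω, Zt1 ω = 0 ∨ Zt1 ω = 1) (hZmeas : Measurable Zt1)
    (p : ℝ) (hp0 : 0 < p) (hp1 : p < 1)
    (hp : μ {ω | Zt1 ω = 1} = ENNReal.ofReal p)
    (Zt2 : Ω → ℝ) (hcb : ∀ ω, Zt2 ω = 1 - Zt1 ω)
    (γ τ : ℝ)
    (Xt2 : Ω → ℝ) (hX2 : ∀ ω, Xt2 ω = Xt1 ω + γ * Zt1 ω)
    (hintX : Integrable Xt1 μ) (hintε : Integrable ε μ)
    (hε0 : ∫ ω, ε ω ∂μ = 0)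
    (hεindep : IndepFun ε (fun ω => (Zt1 ω, Zt2 ω, Xt1 ω)) μ)
    (hXindep : IndepFun Xt1 (fun ω => (Zt1 ω, Zt2 ω)) μ)
    (Yt2 : Ω → ℝ) (hY : ∀ ω, Yt2 ω = τ * Zt2 ω + Xt2 ω + ε ω) :
    (∫ ω, Yt2 ω ∂(μ[|{ω | Zt2 ω = 1}]))
        - (∫ ω, Yt2 ω ∂(μ[|{ω | Zt2 ω = 0}])) = τ - γ ∧
      (γ ≠ 0 →
        (∫ ω, Yt2 ω ∂(μ[|{ω | Zt2 ω = 1}]))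
          - (∫ ω, Yt2 ω ∂(μ[|{ω | Zt2 ω = 0}])) ≠ τ) :=
  cwsd_covariate_mediated_bias_general (mΩ := mΩ) μ Zt1 Xt1 ε hZ hZmeas p hp0 hp1 hp Zt2 hcb γ τ Xt2
    hX2 hintX hintε hεindep hXindep Yt2 hY
end
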